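/- arXiv:0903.4274 — 6 statements merged into one kernel-verified Lean document; each statement's English description precedes it below -/
import Mathlib

section
/- Let H be an N×N real symmetric tridiagonal matrix with diagonal entries B_1,…,B_N and off-diagonal entries J_1,…,J_{N-1}. If there exist a time t_0 > 0 and phase φ such that exp(-i t_0 H) e_1 = e^{iφ} e_N (where e_1, e_N are the first and last standard basis vectors), then B_n = B_{N+1-n} for all n and J_n² = J_{N-n}² for all n. -/
/-!
`U = exp (-i t₀ H)` is unitary and commutes with `H`, so `U e₁ = e^{iφ} e_N` gives
`⟨e₁, H^m e₁⟩ = ⟨U e₁, H^m U e₁⟩ = ⟨e_N, H^m e_N⟩` for all `m`, and the right-hand side is the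
moment sequence at site 1 of the mirrored chain. These moments determine a Jacobi matrix with
positive couplings: the column `H^k e₁` vanishes beyond site `k + 1`, where it equals
`J₁ ⋯ J_k`, so the moments of order `2k + 1` and `2k + 2` are `(J₁ ⋯ J_k)² B_{k+1}` and
`(J₁ ⋯ J_k)² J_{k+1}²` plus terms in the earlier parameters. Conjugating by a diagonal matrix of
signs makes the couplings positive without changing these moments. No coupling vanishes: if
`J_k = 0`, the projection onto the sites up to `k` commutes with `H`, hence with `U`, which then
cannot move `e₁` to `e_N`.
-/

open Matrix

/-- The `N × N` real symmetric tridiagonal matrix (as a complex matrix) with diagonal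
entries `B 0, …, B (N-1)` and off-diagonal entries `J 0, …, J (N-2)`
(`J n` couples sites `n` and `n+1`, 0-indexed). -/
noncomputable def triC (N : ℕ) (B J : ℕ → ℝ) : Matrix (Fin N) (Fin N) ℂ :=
  Matrix.of fun i j =>
    if (i : ℕ) = j then (B i : ℂ)
    else if (i : ℕ) + 1 = j then (J i : ℂ)
    else if (j : ℕ) + 1 = i then (J j : ℂ)
    else 0

open Finset

lemma Matrix.IsSymm.pow_add_apply_self {n R : Type*} [Fintype n] [DecidableEq n] [CommSemiring R]
    {A : Matrix n n R} (hA : A.IsSymm) (p q : ℕ) (i : n) :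
    (A ^ (p + q)) i i = ∑ j, (A ^ p) j i * (A ^ q) j i := by
  rw [pow_add, mul_apply]
  exact sum_congr rfl fun j _ => by rw [(hA.pow p).apply j i]

lemma Matrix.submatrix_equiv_pow {m n R : Type*} [Fintype m] [DecidableEq m] [Fintype n]
    [DecidableEq n] [CommSemiring R] (A : Matrix n n R) (e : m ≃ n) (k : ℕ) :
    A.submatrix e e ^ k = (A ^ k).submatrix e e :=
  (map_pow (reindexAlgEquiv R R e.symm) A k).symm

lemma Matrix.exp_mem_unitary_of_mem_skewAdjoint {n 𝕂 : Type*} [Fintype n] [DecidableEq n]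
    [RCLike 𝕂] {A : Matrix n n 𝕂} (hA : A ∈ skewAdjoint (Matrix n n 𝕂)) :
    NormedSpace.exp A ∈ unitary (Matrix n n 𝕂) := by
  rw [Unitary.mem_iff, star_eq_conjTranspose, ← exp_conjTranspose, ← star_eq_conjTranspose,
    skewAdjoint.mem_iff.mp hA, ← exp_add_of_commute _ _ (Commute.refl A).neg_left,
    ← exp_add_of_commute _ _ (Commute.refl A).neg_right, neg_add_cancel, add_neg_cancel,
    NormedSpace.exp_zero, and_self]

lemma Matrix.exp_neg_I_mul_smul_mem_unitary {n : Type*} [Fintype n] [DecidableEq n]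
    {A : Matrix n n ℂ} (hA : IsSelfAdjoint A) (t : ℝ) :
    NormedSpace.exp ((-(Complex.I * t)) • A) ∈ unitary (Matrix n n ℂ) :=
  exp_mem_unitary_of_mem_skewAdjoint <| hA.smul_mem_skewAdjoint <| by
    simp [skewAdjoint.mem_iff, Complex.conj_ofReal]

section Transfer

variable {n 𝕜 : Type*} [Fintype n] [DecidableEq n] [CommRing 𝕜] {U : Matrix n n 𝕜} {i j : n}
  {c : 𝕜}

lemma Matrix.apply_eq_of_mulVec_single_eq (hUi : U *ᵥ Pi.single i 1 = c • Pi.single j 1) (l : n) :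
    U l i = if l = j then c else 0 := by
  simpa [Pi.single_apply] using congrFun hUi l

lemma Matrix.eq_zero_of_commute_diagonal_of_mulVec_single_eq [NoZeroDivisors 𝕜] {d : n → 𝕜}
    (hU : Commute (diagonal d) U) (hUi : U *ᵥ Pi.single i 1 = c • Pi.single j 1)
    (hd : d i ≠ d j) : c = 0 := by
  have := congrFun (congrFun hU.eq j) i
  rw [diagonal_mul, mul_diagonal, apply_eq_of_mulVec_single_eq hUi, if_pos rfl, mul_comm] at this
  by_contra hc
  exact hd (mul_left_cancel₀ hc this).symm

variable [StarRing 𝕜]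

lemma Matrix.conjTranspose_mul_mul_apply_of_mulVec_single_eq
    (hUi : U *ᵥ Pi.single i 1 = c • Pi.single j 1) (M : Matrix n n 𝕜) :
    (Uᴴ * M * U) i i = star c * c * M j j := by
  simp only [mul_apply, conjTranspose_apply, apply_eq_of_mulVec_single_eq hUi, apply_ite star,
    star_zero, ite_mul, zero_mul, sum_ite_eq', mem_univ, if_true, mul_ite, mul_zero]
  ring

lemma Matrix.apply_self_eq_of_mulVec_single_eq {A : Matrix n n 𝕜} (hU : U ∈ unitary (Matrix n n 𝕜))
    (hUA : Commute U A) (hUi : U *ᵥ Pi.single i 1 = c • Pi.single j 1) : A i i = A j j := by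
  have hc := conjTranspose_mul_mul_apply_of_mulVec_single_eq hUi 1
  have hA := conjTranspose_mul_mul_apply_of_mulVec_single_eq hUi A
  rw [mul_one, ← star_eq_conjTranspose, Unitary.star_mul_self_of_mem hU, one_apply_eq,
    one_apply_eq, mul_one] at hc
  rwa [mul_assoc, ← hUA.eq, ← mul_assoc, ← star_eq_conjTranspose, Unitary.star_mul_self_of_mem hU,
    one_mul, ← hc, one_mul] at hA

end Transfer

def jacobiMatrix {R : Type*} [Zero R] (N : ℕ) (b a : ℕ → R) : Matrix (Fin N) (Fin N) R :=
  of fun i j =>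
    if (i : ℕ) = j then b i
    else if (i : ℕ) + 1 = j then a i
    else if (j : ℕ) + 1 = i then a j
    else 0

section Entries

variable {R : Type*} [Zero R] {N : ℕ} (b a : ℕ → R) {b' a' : ℕ → R}

lemma jacobiMatrix_isSymm : (jacobiMatrix N b a).IsSymm :=
  IsSymm.ext fun i j => by
    simp only [jacobiMatrix, of_apply]
    split_ifs <;> first | rfl | omega | exact congrArg b (by omega)

lemma jacobiMatrix_apply_eq_zero {i j : Fin N} (h : (i : ℕ) + 1 < j ∨ (j : ℕ) + 1 < i) :
    jacobiMatrix N b a i j = 0 := by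
  simp only [jacobiMatrix, of_apply]
  split_ifs <;> first | rfl | omega

variable {b a} in
lemma jacobiMatrix_apply_congr {k : ℕ} (hb : ∀ i < k, b i = b' i) (ha : ∀ i < k, a i = a' i)
    {i j : Fin N} (h : (i : ℕ) < k ∨ (j : ℕ) < k) :
    jacobiMatrix N b a i j = jacobiMatrix N b' a' i j := by
  simp only [jacobiMatrix, of_apply]
  split_ifs <;> first | rfl | exact hb _ (by omega) | exact ha _ (by omega)

lemma jacobiMatrix_reverse :
    jacobiMatrix N (fun i => b (N - 1 - i)) (fun i => a (N - 2 - i)) =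
      (jacobiMatrix N b a).submatrix Fin.rev Fin.rev := by
  ext i j
  simp only [submatrix_apply, jacobiMatrix, of_apply, Fin.val_rev]
  split_ifs <;> first | rfl | omega | exact congrArg b (by omega) | exact congrArg a (by omega)

end Entries

section Powers

variable {R : Type*} [CommSemiring R] {N : ℕ} (b a : ℕ → R) {b' a' : ℕ → R}

lemma jacobiMatrix_map {S : Type*} [Semiring S] (f : R →+* S) :
    (jacobiMatrix N b a).map f = jacobiMatrix N (fun i => f (b i)) (fun i => f (a i)) := by
  ext i j
  simp only [jacobiMatrix, map_apply, of_apply]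
  split_ifs <;> simp

lemma commute_diagonal_jacobiMatrix_of_eq_zero {k : ℕ} (hk : a k = 0) :
    Commute (diagonal fun i : Fin N => if (i : ℕ) ≤ k then (1 : R) else 0)
      (jacobiMatrix N b a) := by
  ext i j
  simp only [diagonal_mul, mul_diagonal, jacobiMatrix, of_apply]
  split_ifs <;> simp only [one_mul, mul_one, zero_mul, mul_zero] <;> first
    | rfl
    | omega
    | rw [show (i : ℕ) = k by omega, hk]
    | rw [show (j : ℕ) = k by omega, hk]

variable [NeZero N]

lemma jacobiMatrix_pow_apply_rev_zero (m : ℕ) :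
    (jacobiMatrix N b a ^ m) (Fin.rev 0) (Fin.rev 0) =
      (jacobiMatrix N (fun i => b (N - 1 - i)) (fun i => a (N - 2 - i)) ^ m) 0 0 := by
  rw [jacobiMatrix_reverse, show (Fin.rev : Fin N → Fin N) = Fin.revPerm from rfl,
    submatrix_equiv_pow]
  rfl

lemma jacobiMatrix_pow_apply_zero_of_lt (m : ℕ) {j : Fin N} (hj : m < j) :
    (jacobiMatrix N b a ^ m) j 0 = 0 := by
  induction m generalizing j with
  | zero => exact one_apply_ne (by rintro rfl; simp at hj)
  | succ m ih =>
    rw [pow_succ', mul_apply]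
    refine sum_eq_zero fun l _ => ?_
    rcases lt_or_ge m l with hl | hl
    · rw [ih hl, mul_zero]
    · rw [jacobiMatrix_apply_eq_zero _ _ (by omega), zero_mul]

lemma jacobiMatrix_pow_apply_self_zero (j : Fin N) :
    (jacobiMatrix N b a ^ (j : ℕ)) j 0 = ∏ i ∈ range j, a i := by
  generalize hm : (j : ℕ) = m
  induction m generalizing j with
  | zero => rw [pow_zero, prod_range_zero, show j = 0 by simpa using hm, one_apply_eq]
  | succ m ih =>
    set l : Fin N := ⟨m, by omega⟩
    rw [pow_succ', mul_apply, sum_eq_single l, ih l rfl, prod_range_succ, mul_comm]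
    · simp only [jacobiMatrix, of_apply, l]
      rw [if_neg (by omega), if_neg (by omega), if_pos (by omega)]
    · intro l' _ hl'
      have hl'm : (l' : ℕ) ≠ m := fun h => hl' (Fin.ext h)
      rcases lt_or_ge m l' with h | h
      · rw [jacobiMatrix_pow_apply_zero_of_lt _ _ m h, mul_zero]
      · rw [jacobiMatrix_apply_eq_zero _ _ (by omega), zero_mul]
    · simp

variable {b a} in
lemma jacobiMatrix_pow_apply_zero_congr {k : ℕ} (hb : ∀ i < k, b i = b' i)
    (ha : ∀ i < k, a i = a' i) {m : ℕ} (hm : m ≤ k) (j : Fin N) :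
    (jacobiMatrix N b a ^ m) j 0 = (jacobiMatrix N b' a' ^ m) j 0 := by
  induction m generalizing j with
  | zero => simp
  | succ m ih =>
    rw [pow_succ', mul_apply, pow_succ', mul_apply]
    refine sum_congr rfl fun l _ => ?_
    rw [← ih (by omega) l]
    rcases lt_or_ge m l with hl | hl
    · rw [jacobiMatrix_pow_apply_zero_of_lt _ _ m hl, mul_zero, mul_zero]
    · rw [jacobiMatrix_apply_congr hb ha (Or.inr (by omega))]

end Powers

section Moments

variable {R : Type*} [CommRing R] {N : ℕ} [NeZero N] {b a b' a' : ℕ → R}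

lemma jacobiMatrix_pow_succ_apply_zero_sub (k : Fin N) (hb : ∀ i < (k : ℕ), b i = b' i)
    (ha : ∀ i < (k : ℕ), a i = a' i) (j : Fin N) :
    (jacobiMatrix N b a ^ ((k : ℕ) + 1)) j 0 - (jacobiMatrix N b' a' ^ ((k : ℕ) + 1)) j 0 =
      (jacobiMatrix N b a j k - jacobiMatrix N b' a' j k) * (jacobiMatrix N b a ^ (k : ℕ)) k 0 := by
  simp_rw [pow_succ', mul_apply, ← jacobiMatrix_pow_apply_zero_congr hb ha le_rfl,
    ← sum_sub_distrib, ← sub_mul]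
  refine sum_eq_single k (fun l _ hl => ?_) (by simp)
  rcases lt_or_gt_of_ne (Fin.val_ne_of_ne hl) with h | h
  · rw [jacobiMatrix_apply_congr hb ha (Or.inr h), sub_self, zero_mul]
  · rw [jacobiMatrix_pow_apply_zero_of_lt _ _ _ h, mul_zero]

lemma jacobiMatrix_pow_odd_apply_zero_sub (k : Fin N) (hb : ∀ i < (k : ℕ), b i = b' i)
    (ha : ∀ i < (k : ℕ), a i = a' i) :
    (jacobiMatrix N b a ^ (2 * (k : ℕ) + 1)) 0 0 - (jacobiMatrix N b' a' ^ (2 * (k : ℕ) + 1)) 0 0 =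
      (∏ i ∈ range k, a i) ^ 2 * (b k - b' k) := by
  rw [two_mul, add_assoc, (jacobiMatrix_isSymm b a).pow_add_apply_self,
    (jacobiMatrix_isSymm b' a').pow_add_apply_self]
  simp_rw [← jacobiMatrix_pow_apply_zero_congr hb ha le_rfl, ← sum_sub_distrib, ← mul_sub,
    jacobiMatrix_pow_succ_apply_zero_sub k hb ha]
  rw [sum_eq_single k, jacobiMatrix_pow_apply_self_zero]
  · simp only [jacobiMatrix, of_apply, if_true]
    ring
  · intro j _ hj
    rcases lt_or_gt_of_ne (Fin.val_ne_of_ne hj) with h | h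
    · rw [jacobiMatrix_apply_congr hb ha (Or.inl h), sub_self, zero_mul, mul_zero]
    · rw [jacobiMatrix_pow_apply_zero_of_lt _ _ _ h, zero_mul]
  · simp

lemma jacobiMatrix_pow_even_apply_zero_sub (k : ℕ) (hk : k + 1 < N) (hb : ∀ i ≤ k, b i = b' i)
    (ha : ∀ i < k, a i = a' i) :
    (jacobiMatrix N b a ^ (2 * k + 2)) 0 0 - (jacobiMatrix N b' a' ^ (2 * k + 2)) 0 0 =
      (∏ i ∈ range k, a i) ^ 2 * (a k ^ 2 - a' k ^ 2) := by
  set K : Fin N := ⟨k, by omega⟩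
  set K' : Fin N := ⟨k + 1, hk⟩
  have hb' : ∀ i < (K : ℕ), b i = b' i := fun i hi => hb i hi.le
  have hdiff := jacobiMatrix_pow_succ_apply_zero_sub K hb' ha
  have hcol : ∀ j ≠ K',
      (jacobiMatrix N b a ^ (k + 1)) j 0 = (jacobiMatrix N b' a' ^ (k + 1)) j 0 := by
    intro j hj
    have hj' : (j : ℕ) ≠ k + 1 := fun h => hj (Fin.ext h)
    rw [← sub_eq_zero, hdiff]
    suffices jacobiMatrix N b a j K = jacobiMatrix N b' a' j K by rw [this, sub_self, zero_mul]
    simp only [jacobiMatrix, of_apply, K]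
    split_ifs <;> first | rfl | omega | exact hb _ (by omega) | exact ha _ (by omega)
  have hlast : (jacobiMatrix N b a ^ (k + 1)) K' 0 = (∏ i ∈ range k, a i) * a k :=
    (jacobiMatrix_pow_apply_self_zero b a K').trans (prod_range_succ _ _)
  have hlast' : (jacobiMatrix N b' a' ^ (k + 1)) K' 0 = (∏ i ∈ range k, a i) * a' k :=
    (jacobiMatrix_pow_apply_self_zero b' a' K').trans <| by
      rw [prod_range_succ, prod_congr rfl fun i hi => (ha i (mem_range.mp hi)).symm]
  rw [show 2 * k + 2 = (k + 1) + (k + 1) by ring, (jacobiMatrix_isSymm b a).pow_add_apply_self,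
    (jacobiMatrix_isSymm b' a').pow_add_apply_self, ← sum_sub_distrib,
    sum_eq_single K' (fun j _ hj => by rw [hcol j hj, sub_self]) (by simp), hlast, hlast']
  ring

lemma jacobiMatrix_coupling_ne_zero_of_mulVec_single_eq [IsDomain R]
    {U : Matrix (Fin N) (Fin N) R} {c : R}
    (hU : ∀ D, Commute D (jacobiMatrix N b a) → Commute D U)
    (hUi : U *ᵥ Pi.single 0 1 = c • Pi.single (Fin.rev 0) 1) (hc : c ≠ 0) {k : ℕ}
    (hk : k + 1 < N) : a k ≠ 0 := fun hak =>
  hc <| eq_zero_of_commute_diagonal_of_mulVec_single_eq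
    (hU _ (commute_diagonal_jacobiMatrix_of_eq_zero b a hak)) hUi <| by
      show (if 0 ≤ k then (1 : R) else 0) ≠ if N - 1 ≤ k then 1 else 0
      rw [if_pos k.zero_le, if_neg (by omega)]
      exact one_ne_zero

end Moments

section Ordered

variable {R : Type*} [CommRing R] [LinearOrder R] {N : ℕ}

def couplingSigns (a : ℕ → R) (i : ℕ) : R :=
  ∏ t ∈ range i, if a t < 0 then -1 else 1

lemma couplingSigns_mul_self (a : ℕ → R) (i : ℕ) : couplingSigns a i * couplingSigns a i = 1 := by
  rw [couplingSigns, ← prod_mul_distrib]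
  exact prod_eq_one fun t _ => by split_ifs <;> norm_num

variable [IsStrictOrderedRing R]

lemma couplingSigns_mul_mul_couplingSigns_succ (a : ℕ → R) (i : ℕ) :
    couplingSigns a i * a i * couplingSigns a (i + 1) = |a i| := by
  rw [show couplingSigns a (i + 1) = couplingSigns a i * _ from prod_range_succ _ _]
  split_ifs with h
  · linear_combination (-a i) * couplingSigns_mul_self a i - abs_of_neg h
  · linear_combination a i * couplingSigns_mul_self a i - abs_of_nonneg (not_lt.mp h)

lemma diagonal_couplingSigns_mul_jacobiMatrix_mul (b a : ℕ → R) :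
    diagonal (fun i : Fin N => couplingSigns a i) * jacobiMatrix N b a *
      diagonal (fun i : Fin N => couplingSigns a i) = jacobiMatrix N b (fun i => |a i|) := by
  ext i j
  rw [mul_diagonal, diagonal_mul]
  simp only [jacobiMatrix, of_apply]
  split_ifs with h₁ h₂ h₃
  · rw [h₁]
    linear_combination b j * couplingSigns_mul_self a j
  · rw [← h₂, couplingSigns_mul_mul_couplingSigns_succ]
  · rw [← h₃, ← couplingSigns_mul_mul_couplingSigns_succ]
    ring
  · ring

variable [NeZero N] {b a b' a' : ℕ → R}

theorem jacobiMatrix_params_eq_of_pos_of_pow_apply_zero_eq (ha : ∀ i, i + 1 < N → 0 < a i)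
    (ha' : ∀ i, i + 1 < N → 0 < a' i)
    (h : ∀ m, (jacobiMatrix N b a ^ m) 0 0 = (jacobiMatrix N b' a' ^ m) 0 0) (k : ℕ) :
    (k < N → b k = b' k) ∧ (k + 1 < N → a k = a' k) := by
  induction k using Nat.strong_induction_on with
  | _ k ih =>
  by_cases hk : k < N
  swap
  · exact ⟨fun h => absurd h hk, fun h => absurd (by omega) hk⟩
  have hb_lt : ∀ i < k, b i = b' i := fun i hi => (ih i hi).1 (by omega)
  have ha_lt : ∀ i < k, a i = a' i := fun i hi => (ih i hi).2 (by omega)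
  have hc : (∏ i ∈ range k, a i) ^ 2 ≠ 0 :=
    pow_ne_zero _ (prod_pos fun i hi => ha i (by have := mem_range.mp hi; omega)).ne'
  have hbk : b k = b' k := by
    have := jacobiMatrix_pow_odd_apply_zero_sub ⟨k, hk⟩ hb_lt ha_lt
    rw [h, sub_self, eq_comm, mul_eq_zero, sub_eq_zero] at this
    exact this.resolve_left hc
  refine ⟨fun _ => hbk, fun hk1 => ?_⟩
  have hb_le : ∀ i ≤ k, b i = b' i := fun i hi => hi.lt_or_eq.elim (hb_lt i) (· ▸ hbk)
  have := jacobiMatrix_pow_even_apply_zero_sub k hk1 hb_le ha_lt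
  rw [h, sub_self, eq_comm, mul_eq_zero, sub_eq_zero] at this
  exact (sq_eq_sq₀ (ha k hk1).le (ha' k hk1).le).mp (this.resolve_left hc)

lemma jacobiMatrix_abs_pow_apply_zero (b a : ℕ → R) (m : ℕ) :
    (jacobiMatrix N b (fun i => |a i|) ^ m) 0 0 = (jacobiMatrix N b a ^ m) 0 0 := by
  set D := diagonal fun i : Fin N => couplingSigns a i
  have hD : D * D = 1 := by
    rw [diagonal_mul_diagonal, ← diagonal_one]
    exact congrArg diagonal (funext fun i => couplingSigns_mul_self a i)
  let u : (Matrix (Fin N) (Fin N) R)ˣ := ⟨D, D, hD, hD⟩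
  rw [← diagonal_couplingSigns_mul_jacobiMatrix_mul,
    show D * jacobiMatrix N b a * D = u * jacobiMatrix N b a * ↑u⁻¹ from rfl, Units.conj_pow]
  simp [u, D, couplingSigns]

theorem jacobiMatrix_params_eq_of_pow_apply_zero_eq (ha : ∀ i, i + 1 < N → a i ≠ 0)
    (ha' : ∀ i, i + 1 < N → a' i ≠ 0)
    (h : ∀ m, (jacobiMatrix N b a ^ m) 0 0 = (jacobiMatrix N b' a' ^ m) 0 0) (k : ℕ) :
    (k < N → b k = b' k) ∧ (k + 1 < N → |a k| = |a' k|) :=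
  jacobiMatrix_params_eq_of_pos_of_pow_apply_zero_eq (fun i hi => abs_pos.mpr (ha i hi))
    (fun i hi => abs_pos.mpr (ha' i hi))
    (fun m => by rw [jacobiMatrix_abs_pow_apply_zero, jacobiMatrix_abs_pow_apply_zero, h]) k

end Ordered

lemma triC_eq_map (N : ℕ) (B J : ℕ → ℝ) :
    triC N B J = (jacobiMatrix N B J).map Complex.ofRealHom := by
  rw [jacobiMatrix_map]
  rfl

lemma triC_isSelfAdjoint (N : ℕ) (B J : ℕ → ℝ) : IsSelfAdjoint (triC N B J) := by
  rw [triC_eq_map]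
  exact (isHermitian_iff_isSymm.mpr (jacobiMatrix_isSymm B J)).map _
    fun x => (Complex.conj_ofReal x).symm

/-- If an `N × N` real symmetric tridiagonal matrix `H` (diagonal `B`, off-diagonal `J`)
admits a time `t₀ > 0` and a phase `φ` with `exp (-i t₀ H) e₁ = e^{iφ} e_N`, then
`B n = B (N+1-n)` and `J n ^ 2 = J (N-n) ^ 2` for all `n` (stated here 0-indexed:
`B i = B (N-1-i)` for `i < N` and `J i ^ 2 = J (N-2-i) ^ 2` for `i + 1 < N`). -/
theorem mirror_symmetry_of_perfect_state_transfer
    (N : ℕ) (hN : 0 < N) (B J : ℕ → ℝ) (t₀ φ : ℝ)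
    (hPST : (NormedSpace.exp ((-(Complex.I * t₀)) • triC N B J)).mulVec
        (Pi.single (⟨0, hN⟩ : Fin N) (1 : ℂ)) =
      Complex.exp (Complex.I * φ) •
        (Pi.single (⟨N - 1, by omega⟩ : Fin N) (1 : ℂ) : Fin N → ℂ)) :
    (∀ i, i < N → B i = B (N - 1 - i)) ∧
      (∀ i, i + 1 < N → J i ^ 2 = J (N - 2 - i) ^ 2) := by
  have : NeZero N := ⟨hN.ne'⟩
  set U := NormedSpace.exp ((-(Complex.I * t₀)) • triC N B J)
  have hU : U ∈ unitary _ := exp_neg_I_mul_smul_mem_unitary (triC_isSelfAdjoint N B J) t₀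
  have hPST' : U *ᵥ Pi.single 0 1 = Complex.exp (Complex.I * φ) • Pi.single (Fin.rev 0) 1 := hPST
  have hUD : ∀ D, Commute D (jacobiMatrix N (fun i => (B i : ℂ)) (fun i => (J i : ℂ))) →
      Commute D U := fun D hD => (hD.smul_right _).exp_right
  have hUH : Commute U (triC N B J) := (hUD _ (Commute.refl _)).symm
  have hJ : ∀ i, i + 1 < N → J i ≠ 0 := fun k hk =>
    Complex.ofReal_ne_zero.mp <| jacobiMatrix_coupling_ne_zero_of_mulVec_single_eq hUD hPST'
      (Complex.exp_ne_zero _) hk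
  have hmom : ∀ m, (jacobiMatrix N B J ^ m) 0 0 =
      (jacobiMatrix N (fun i => B (N - 1 - i)) (fun i => J (N - 2 - i)) ^ m) 0 0 := by
    intro m
    have := apply_self_eq_of_mulVec_single_eq hU (hUH.pow_right m) hPST'
    rw [triC_eq_map, ← Matrix.map_pow, map_apply, map_apply] at this
    exact (Complex.ofReal_injective this).trans (jacobiMatrix_pow_apply_rev_zero B J m)
  have hrev := jacobiMatrix_params_eq_of_pow_apply_zero_eq hJ
    (fun i hi => hJ (N - 2 - i) (by omega)) hmom
  exact ⟨fun i hi => (hrev i).1 hi, fun i hi => (sq_eq_sq_iff_abs_eq_abs _ _).mpr ((hrev i).2 hi)⟩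
end

section
/- Let H be an N×N real symmetric tridiagonal matrix with nonzero off-diagonal entries J_n, and suppose ⟨e_1, H^{2m+1} e_1⟩ = 0 for all integers m ≥ 0. Then all diagonal entries of H vanish: B_n = 0 for all n. -/
open Matrix

/-- Real symmetric tridiagonal matrix: diagonal `B`, off-diagonal `J`. -/
def triR (N : ℕ) (B J : ℕ → ℝ) : Matrix (Fin N) (Fin N) ℝ :=
  Matrix.of fun i j =>
    if (i : ℕ) = j then B i
    else if (i : ℕ) + 1 = j then J i
    else if (j : ℕ) + 1 = i then J j
    else 0

/-!
Induct on `n`, assuming `B l = 0` for `l < n`; indices start at `0`. Then the column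
`v = H^n e₀` is supported on the indices `i ≤ n` with `i ≡ n (mod 2)`, and `v n = J 0 ⋯ J (n-1) ≠ 0`.
By symmetry `⟨e₀, H^{2n+1} e₀⟩ = ⟨v, H v⟩`. Writing `H` as its diagonal plus its off-diagonal part, the
off-diagonal part contributes nothing, since it only links indices of opposite parity, and the
diagonal part contributes `∑ B i v_i² = B n v_n²`. Hence `B n = 0`.
-/

namespace triR

variable {N : ℕ} (B J : ℕ → ℝ)

theorem apply_self (i : Fin N) : triR N B J i i = B i := by
  simp [triR]

theorem apply_eq_zero {i j : Fin N} (h₀ : (i : ℕ) ≠ j) (h₁ : (i : ℕ) + 1 ≠ j)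
    (h₂ : (j : ℕ) + 1 ≠ i) : triR N B J i j = 0 := by
  simp [triR, h₀, h₁, h₂]

theorem isSymm : (triR N B J).IsSymm := by
  ext i j
  simp only [transpose_apply, triR, of_apply]
  split_ifs <;> first | rfl | omega | congr 1

theorem eq_diagonal_add : triR N B J = diagonal (fun i : Fin N => B i) + triR N 0 J := by
  ext i j
  by_cases h : i = j
  · subst h; simp [apply_self]
  · have h' : (i : ℕ) ≠ j := Fin.val_ne_of_ne h
    simp [triR, h, h']

theorem dotProduct_zero_mulVec_eq_zero {v : Fin N → ℝ} {p : ℕ}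
    (hv : ∀ i : Fin N, (i : ℕ) % 2 ≠ p % 2 → v i = 0) : v ⬝ᵥ (triR N 0 J *ᵥ v) = 0 := by
  refine Finset.sum_eq_zero fun i _ => ?_
  rw [mulVec, dotProduct, Finset.mul_sum]
  refine Finset.sum_eq_zero fun j _ => ?_
  by_cases hi : (i : ℕ) % 2 = p % 2
  · by_cases hj : (j : ℕ) % 2 = p % 2
    · by_cases hij : i = j
      · subst hij; simp [apply_self]
      · rw [apply_eq_zero 0 J (Fin.val_ne_of_ne hij) (by omega) (by omega)]; ring
    · rw [hv j hj]; ring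
  · rw [hv i hi]; ring

theorem pow_apply_eq_zero_of_lt {k : ℕ} {i j : Fin N} (h : (j : ℕ) + k < i) :
    (triR N B J ^ k) i j = 0 := by
  induction k generalizing i with
  | zero => exact one_apply_ne fun hij => by subst hij; omega
  | succ k ih =>
    rw [pow_succ', mul_apply]
    refine Finset.sum_eq_zero fun l _ => ?_
    by_cases hl : (j : ℕ) + k < l
    · rw [ih hl, mul_zero]
    · rw [apply_eq_zero B J (by omega) (by omega) (by omega), zero_mul]

theorem pow_apply_eq_prod (hN : 0 < N) {k : ℕ} (hk : k < N) :
    (triR N B J ^ k) ⟨k, hk⟩ ⟨0, hN⟩ = ∏ l ∈ Finset.range k, J l := by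
  induction k with
  | zero => simp
  | succ k ih =>
    rw [pow_succ', mul_apply, Finset.sum_eq_single ⟨k, by omega⟩, ih (by omega),
      Finset.prod_range_succ, mul_comm]
    · simp [triR]; omega
    · intro l _ hl
      have hl' : (l : ℕ) ≠ k := fun h => hl (Fin.ext h)
      by_cases hkl : k < (l : ℕ)
      · rw [pow_apply_eq_zero_of_lt B J (by simpa using hkl), mul_zero]
      · rw [apply_eq_zero B J (by simp; omega) (by simp; omega) (by simp; omega), zero_mul]
    · simp

theorem pow_apply_eq_zero_of_mod_two_ne (hN : 0 < N) {k : ℕ} (hB : ∀ l < k, B l = 0)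
    {i : Fin N} (h : (i : ℕ) % 2 ≠ k % 2) : (triR N B J ^ k) i ⟨0, hN⟩ = 0 := by
  induction k generalizing i with
  | zero => exact one_apply_ne fun hi => by subst hi; simp at h
  | succ k ih =>
    rw [pow_succ', mul_apply]
    refine Finset.sum_eq_zero fun l _ => ?_
    by_cases hli : l = i
    · subst hli
      rw [apply_self]
      by_cases hlk : (l : ℕ) ≤ k
      · rw [hB l (by omega), zero_mul]
      · rw [pow_apply_eq_zero_of_lt B J (by simp; omega), mul_zero]
    · by_cases hlk : (l : ℕ) % 2 = k % 2
      · rw [apply_eq_zero B J (Fin.val_ne_of_ne (Ne.symm hli)) (by omega) (by omega), zero_mul]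
      · rw [ih (fun m hm => hB m (by omega)) hlk, mul_zero]

theorem pow_two_mul_add_one_apply (k : ℕ) (i j : Fin N) :
    (triR N B J ^ (2 * k + 1)) i j =
      (fun l => (triR N B J ^ k) l i) ⬝ᵥ (triR N B J *ᵥ fun l => (triR N B J ^ k) l j) := by
  have hsplit : triR N B J ^ (2 * k + 1) = triR N B J ^ k * (triR N B J * triR N B J ^ k) := by
    rw [← pow_succ', ← pow_add]; ring_nf
  rw [hsplit, mul_apply]
  refine Finset.sum_congr rfl fun l _ => ?_
  rw [((isSymm B J).pow k).apply, mul_apply]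
  rfl

theorem dotProduct_mulVec_eq_mul_sq {v : Fin N → ℝ} {n : ℕ} (hn : n < N)
    (hB : ∀ l < n, B l = 0) (hpar : ∀ i : Fin N, (i : ℕ) % 2 ≠ n % 2 → v i = 0)
    (hsupp : ∀ i : Fin N, n < i → v i = 0) :
    v ⬝ᵥ (triR N B J *ᵥ v) = B n * v ⟨n, hn⟩ ^ 2 := by
  rw [eq_diagonal_add, add_mulVec, dotProduct_add, dotProduct_zero_mulVec_eq_zero J hpar,
    add_zero, dotProduct, Finset.sum_eq_single ⟨n, hn⟩]
  · rw [mulVec_diagonal]; ring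
  · intro i _ hi
    have hi' : (i : ℕ) ≠ n := fun h => hi (Fin.ext h)
    rcases lt_or_gt_of_ne hi' with hlt | hgt
    · rw [mulVec_diagonal, hB i hlt]; ring
    · rw [hsupp i hgt, zero_mul]
  · simp

end triR

/-- If a real symmetric tridiagonal matrix `H` with nonzero off-diagonal entries
satisfies `⟨e₁, H^{2m+1} e₁⟩ = 0` for all `m ≥ 0`, then all its diagonal entries
vanish. -/
theorem diagonal_zero_of_odd_moments_zero
    (N : ℕ) (hN : 0 < N) (B J : ℕ → ℝ)
    (hJ : ∀ i, i + 1 < N → J i ≠ 0)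
    (hmom : ∀ m : ℕ, (triR N B J ^ (2 * m + 1)) ⟨0, hN⟩ ⟨0, hN⟩ = 0) :
    ∀ n, n < N → B n = 0 := by
  intro n
  induction n using Nat.strong_induction_on with
  | _ n ih =>
  intro hn
  have hB : ∀ l < n, B l = 0 := fun l hl => ih l hl (hl.trans hn)
  have hprod : ∏ l ∈ Finset.range n, J l ≠ 0 :=
    Finset.prod_ne_zero_iff.mpr fun l hl => hJ l (by simp at hl; omega)
  have hquad := triR.dotProduct_mulVec_eq_mul_sq B J hn hB
    (fun i => triR.pow_apply_eq_zero_of_mod_two_ne B J hN hB)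
    (fun i hi => triR.pow_apply_eq_zero_of_lt B J (j := ⟨0, hN⟩) (by simpa using hi))
  rw [← triR.pow_two_mul_add_one_apply, hmom, triR.pow_apply_eq_prod] at hquad
  simpa [hprod] using hquad.symm
end

section
/- Let H be an N×N (N even) real symmetric mirror-symmetric tridiagonal matrix with positive off-diagonals achieving perfect state transfer in time t_0, so that consecutive eigenvalues (ordered increasingly) differ by odd multiples of π/t_0 and eigenvector symmetries alternate. Then the maximal coupling satisfies J_max ≥ (N/4)·(π/t_0). -/
open Matrix Finset Real

/-- The mirror (order-reversing) permutation matrix `S eₙ = e_{N+1-n}`. -/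
def mirrorR (N : ℕ) : Matrix (Fin N) (Fin N) ℝ :=
  Matrix.of fun i j => if j = i.rev then 1 else 0

/-!
Let `S` be the mirror matrix. Every `v k` is an eigenvector of `H = triR N B J` for `λₖ` and of
`S` for `εₖ = (-1)^(k+1)`, so `trace (H S) = ∑ₖ εₖ λₖ = ∑ⱼ (λ₂ⱼ₊₁ - λ₂ⱼ) ≥ (N/2)·π/t₀`, each gap
being an odd multiple of `π/t₀`. On the other hand `(H S)ᵢᵢ = H i (N-1-i)`, and for even `N` this
anti-diagonal meets the tridiagonal band only at the two central entries, so
`trace (H S) = 2 J (N/2 - 1)`.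
-/

theorem Fin.sum_two_mul_eq_sum_pairs {R : Type*} [AddCommMonoid R] {M : ℕ}
    (f : Fin (2 * M) → R) :
    ∑ k, f k = ∑ j : Fin M, (f ⟨2 * j, by omega⟩ + f ⟨2 * j + 1, by omega⟩) := by
  rw [← (finProdFinEquiv.trans (finCongr (mul_comm M 2))).sum_comp, Fintype.sum_prod_type]
  refine Finset.sum_congr rfl fun j _ => ?_
  simp only [Fin.sum_univ_two, Equiv.trans_apply, finCongr_apply]
  congr 2 <;> ext <;> simp [add_comm]

theorem nsmul_le_sum_neg_one_pow_mul {R : Type*} [CommRing R] [PartialOrder R]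
    [IsOrderedRing R] {M : ℕ} (f : Fin (2 * M) → R) (d : R)
    (hgap : ∀ j : Fin M, d ≤ f ⟨2 * j + 1, by omega⟩ - f ⟨2 * j, by omega⟩) :
    M • d ≤ ∑ k : Fin (2 * M), (-1) ^ ((k : ℕ) + 1) * f k := by
  rw [Fin.sum_two_mul_eq_sum_pairs]
  calc M • d = ∑ _j : Fin M, d := by simp
    _ ≤ _ := Finset.sum_le_sum fun j _ => by
      simpa [pow_succ, pow_mul, sub_eq_neg_add] using hgap j

theorem neg_one_pow_sub_one_sub {R : Type*} [Monoid R] [HasDistribNeg R] {N k : ℕ}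
    (hN : Even N) (hk : k < N) : (-1 : R) ^ (N - 1 - k) = (-1) ^ (k + 1) := by
  obtain ⟨r, rfl⟩ := hN
  exact neg_one_pow_congr (by simp only [Nat.even_iff]; omega)

theorem Matrix.mul_transpose_eq_transpose_mul_diagonal {n R : Type*} [Fintype n] [DecidableEq n]
    [CommRing R] {A : Matrix n n R} {v : n → n → R} {a : n → R}
    (hA : ∀ k, A *ᵥ v k = a k • v k) : A * (of v)ᵀ = (of v)ᵀ * diagonal a := by
  ext i k
  rw [mul_diagonal]
  simpa [Matrix.mul_apply, mulVec, dotProduct, mul_comm] using congrFun (hA k) i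

theorem Matrix.trace_mul_eq_sum_of_mul_eq_mul_diagonal {n R : Type*} [Fintype n]
    [DecidableEq n] [CommRing R] {A P W W' : Matrix n n R} {a e : n → R}
    (hW : W' * W = 1) (hA : A * W = W * diagonal a) (hP : P * W = W * diagonal e) :
    trace (A * P) = ∑ k, a k * e k := by
  have hW' : W * W' = 1 := mul_eq_one_comm.mp hW
  calc trace (A * P) = trace (A * P * W * W') := by
        rw [Matrix.mul_assoc _ W, hW', Matrix.mul_one]
    _ = trace (W * (diagonal a * diagonal e) * W') := by
      rw [Matrix.mul_assoc A, hP, ← Matrix.mul_assoc, hA, Matrix.mul_assoc W]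
    _ = trace (diagonal a * diagonal e) := by
      rw [Matrix.trace_mul_cycle, ← Matrix.mul_assoc, hW, Matrix.one_mul]
    _ = ∑ k, a k * e k := by simp [trace]

theorem Matrix.trace_mul_eq_sum_of_orthonormal_eigenvectors {n R : Type*} [Fintype n]
    [DecidableEq n] [CommRing R] {A P : Matrix n n R} {v : n → n → R} {a e : n → R}
    (horth : ∀ j k, ∑ i, v j i * v k i = if j = k then 1 else 0)
    (hA : ∀ k, A *ᵥ v k = a k • v k) (hP : ∀ k, P *ᵥ v k = e k • v k) :
    trace (A * P) = ∑ k, a k * e k := by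
  refine trace_mul_eq_sum_of_mul_eq_mul_diagonal (W' := of v) ?_
    (mul_transpose_eq_transpose_mul_diagonal hA) (mul_transpose_eq_transpose_mul_diagonal hP)
  ext j k
  simpa [Matrix.mul_apply, one_apply] using horth j k

theorem mul_mirrorR_apply_self {N : ℕ} (A : Matrix (Fin N) (Fin N) ℝ) (i : Fin N) :
    (A * mirrorR N) i i = A i i.rev := by
  simp [Matrix.mul_apply, mirrorR, ← Fin.rev_eq_iff]

theorem triR_apply_rev {M : ℕ} (B J : ℕ → ℝ) (i : Fin (2 * M)) :
    triR (2 * M) B J i i.rev =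
      (if (i : ℕ) = M - 1 then J (M - 1) else 0) + (if (i : ℕ) = M then J (M - 1) else 0) := by
  have hrev : (i.rev : ℕ) = 2 * M - 1 - i := by rw [Fin.val_rev]; omega
  simp only [triR, of_apply, hrev]
  split_ifs <;> (try simp only [add_zero, zero_add]) <;> first | omega | exact congrArg J (by omega)

theorem trace_triR_mul_mirrorR {M : ℕ} (hM : 0 < M) (B J : ℕ → ℝ) :
    trace (triR (2 * M) B J * mirrorR (2 * M)) = 2 * J (M - 1) := by
  have hsum (c : ℕ) (hc : c < 2 * M) :
      ∑ i : Fin (2 * M), (if (i : ℕ) = c then J (M - 1) else 0) = J (M - 1) := by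
    rw [Fintype.sum_eq_single ⟨c, hc⟩] <;> simp_all [Fin.ext_iff]
  simp only [trace, diag_apply, mul_mirrorR_apply_self, triR_apply_rev, sum_add_distrib,
    hsum (M - 1) (by omega), hsum M (by omega)]
  ring

theorem coupling_lower_bound_of_perfect_state_transfer_general
    (N : ℕ) (hN : 0 < N) (hEven : Even N) (B J : ℕ → ℝ) (t₀ : ℝ) (ht₀ : 0 < t₀)
    (lam : Fin N → ℝ)
    (v : Fin N → Fin N → ℝ)
    (heig : ∀ k, (triR N B J).mulVec (v k) = lam k • v k)
    (horth : ∀ j k, (∑ i, v j i * v k i) = if j = k then 1 else 0)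
    (hgap : ∀ (k : Fin N) (h : (k : ℕ) + 1 < N),
      ∃ m : ℕ, lam ⟨(k : ℕ) + 1, h⟩ - lam k = (2 * (m : ℝ) + 1) * (Real.pi / t₀))
    (halt : ∀ k : Fin N,
      (mirrorR N).mulVec (v k) = ((-1 : ℝ) ^ (N - 1 - (k : ℕ))) • v k) :
    ∃ i, i + 1 < N ∧ (N : ℝ) * Real.pi / (4 * t₀) ≤ J i := by
  obtain ⟨M, rfl⟩ := hEven.two_dvd
  have hM : 0 < M := by omega
  have hgap_pairs (j : Fin M) :
      π / t₀ ≤ lam ⟨2 * j + 1, by omega⟩ - lam ⟨2 * j, by omega⟩ := by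
    obtain ⟨m, hm⟩ := hgap ⟨2 * j, by omega⟩ (show 2 * (j : ℕ) + 1 < 2 * M by omega)
    rw [hm]
    exact le_mul_of_one_le_left (by positivity) (by linarith [m.cast_nonneg (α := ℝ)])
  have htrace : ∑ k : Fin (2 * M), (-1) ^ ((k : ℕ) + 1) * lam k = 2 * J (M - 1) := by
    rw [← trace_triR_mul_mirrorR hM B J,
      trace_mul_eq_sum_of_orthonormal_eigenvectors horth heig halt]
    refine Finset.sum_congr rfl fun k _ => ?_
    rw [neg_one_pow_sub_one_sub (even_two_mul M) k.isLt, mul_comm]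
  have hbound := nsmul_le_sum_neg_one_pow_mul lam _ hgap_pairs
  rw [htrace, nsmul_eq_mul] at hbound
  refine ⟨M - 1, by omega, ?_⟩
  rw [div_le_iff₀ (by positivity)]
  rw [mul_div_assoc', div_le_iff₀ ht₀] at hbound
  push_cast
  linarith

/-- For an even-size real symmetric, mirror-symmetric, tridiagonal matrix with positive
couplings whose (increasingly ordered) eigenvalues have consecutive gaps equal to odd
multiples of `π/t₀` and whose eigenvector mirror-symmetries alternate (the top
eigenvector being symmetric), the maximal coupling satisfies
`J_max ≥ (N/4)·(π/t₀)`. -/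
theorem coupling_lower_bound_of_perfect_state_transfer
    (N : ℕ) (hN : 0 < N) (hEven : Even N) (B J : ℕ → ℝ) (t₀ : ℝ) (ht₀ : 0 < t₀)
    (hBsym : ∀ i, i < N → B i = B (N - 1 - i))
    (hJsym : ∀ i, i + 1 < N → J i = J (N - 2 - i))
    (hJpos : ∀ i, i + 1 < N → 0 < J i)
    (lam : Fin N → ℝ) (hmono : StrictMono lam)
    (v : Fin N → Fin N → ℝ)
    (heig : ∀ k, (triR N B J).mulVec (v k) = lam k • v k)
    (horth : ∀ j k, (∑ i, v j i * v k i) = if j = k then 1 else 0)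
    (hgap : ∀ (k : Fin N) (h : (k : ℕ) + 1 < N),
      ∃ m : ℕ, lam ⟨(k : ℕ) + 1, h⟩ - lam k = (2 * (m : ℝ) + 1) * (Real.pi / t₀))
    (halt : ∀ k : Fin N,
      (mirrorR N).mulVec (v k) = ((-1 : ℝ) ^ (N - 1 - (k : ℕ))) • v k) :
    ∃ i, i + 1 < N ∧ (N : ℝ) * Real.pi / (4 * t₀) ≤ J i :=
  coupling_lower_bound_of_perfect_state_transfer_general N hN hEven B J t₀ ht₀ lam v heig horth hgap
    halt
end

section
/- Let H be a Hermitian matrix and ψ a unit vector with ⟨ψ, e^{-iHt_r} ψ⟩ = 0 for some t_r > 0. Then t_r ≥ π / (2·√(⟨ψ,H²ψ⟩ - ⟨ψ,Hψ⟩²)), i.e., the time to reach an orthogonal state is bounded below by π divided by twice the energy standard deviation (Mandelstam–Tamm bound). -/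
/-! In an eigenbasis of `H` the state `ψ` becomes a probability distribution `p` on the
eigenvalues `E k`, and orthogonality reads `∑ p_k e^{-i t E_k} = 0`; after a phase shift by the
mean `μ` this gives `∑ p_k cos (t (E_k - μ)) = 0`. Averaging the elementary inequality
`π²/4 ≤ x² + π cos x` over `p` at `x = t (E_k - μ)` then yields `π²/4 ≤ t² Var(E)`. -/

open Matrix Finset

open Real in
theorem pi_sq_div_four_le_sq_add_pi_mul_cos (x : ℝ) : π ^ 2 / 4 ≤ x ^ 2 + π * cos x := by
  wlog hx : 0 ≤ x generalizing x
  · simpa using this (-x) (by linarith)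
  rcases le_total x (π / 2) with hx2 | hx2
  · have hcos : π / 2 - x - (π / 2 - x) ^ 3 / 6 ≤ cos x := by
      simpa [sin_pi_div_two_sub] using sin_ge_sub_cube (x := π / 2 - x) (by linarith)
    -- with `y = π/2 - x` the claim becomes `y² (1 - π y / 6) ≥ 0`, and `π y ≤ π² / 2 < 6`
    have hy : 0 ≤ (π / 2 - x) ^ 2 * (6 - π * (π / 2 - x)) :=
      mul_nonneg (sq_nonneg _) (by nlinarith [pi_lt_d2])
    nlinarith
  · have hcos : π / 2 - x ≤ cos x := by
      have := sin_le (x := x - π / 2) (by linarith)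
      rw [sin_sub_pi_div_two] at this
      linarith
    nlinarith [sq_nonneg (x - π / 2), pi_pos]

section Weights

variable {ι : Type*} [Fintype ι] (p E : ι → ℝ)

open Complex in
theorem sum_mul_cos_eq_zero_of_sum_mul_exp_eq_zero {t : ℝ}
    (h : ∑ k, (p k : ℂ) * exp (-(I * t) * E k) = 0) (c : ℝ) :
    ∑ k, p k * Real.cos (t * (E k - c)) = 0 := by
  have hphase : ∑ k, (p k : ℂ) * exp ((-(t * (E k - c)) : ℝ) * I) = 0 := by
    rw [← mul_zero (exp (I * t * c)), ← h, mul_sum]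
    refine sum_congr rfl fun k _ => ?_
    rw [mul_left_comm, ← exp_add]
    push_cast
    ring_nf
  simpa only [re_sum, re_ofReal_mul, exp_ofReal_mul_I_re, Real.cos_neg, zero_re]
    using congrArg re hphase

theorem sum_mul_sub_sq_eq (hp : ∑ k, p k = 1) :
    ∑ k, p k * (E k - ∑ j, p j * E j) ^ 2 = ∑ k, p k * E k ^ 2 - (∑ k, p k * E k) ^ 2 := by
  set μ := ∑ j, p j * E j
  calc ∑ k, p k * (E k - μ) ^ 2
      = ∑ k, p k * E k ^ 2 - 2 * μ * ∑ k, p k * E k + μ ^ 2 * ∑ k, p k := by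
        simp only [mul_sum, ← sum_sub_distrib, ← sum_add_distrib]
        exact sum_congr rfl fun k _ => by ring
    _ = ∑ k, p k * E k ^ 2 - μ ^ 2 := by rw [hp]; ring

open Real in
theorem pi_div_two_sq_le_sq_mul_variance (hp0 : ∀ k, 0 ≤ p k) (hp : ∑ k, p k = 1) {t : ℝ}
    (horth : ∑ k, (p k : ℂ) * Complex.exp (-(Complex.I * t) * E k) = 0) :
    (π / 2) ^ 2 ≤ t ^ 2 * (∑ k, p k * E k ^ 2 - (∑ k, p k * E k) ^ 2) := by
  set μ := ∑ k, p k * E k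
  calc (π / 2) ^ 2 = ∑ k, p k * (π ^ 2 / 4) := by rw [← sum_mul, hp]; ring
    _ ≤ ∑ k, p k * ((t * (E k - μ)) ^ 2 + π * cos (t * (E k - μ))) := by
        gcongr with k
        · exact hp0 k
        · exact pi_sq_div_four_le_sq_add_pi_mul_cos _
    _ = t ^ 2 * ∑ k, p k * (E k - μ) ^ 2 + π * ∑ k, p k * cos (t * (E k - μ)) := by
        simp only [mul_sum, ← sum_add_distrib]
        exact sum_congr rfl fun k _ => by ring
    _ = t ^ 2 * (∑ k, p k * E k ^ 2 - μ ^ 2) := by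
        rw [sum_mul_cos_eq_zero_of_sum_mul_exp_eq_zero p E horth, sum_mul_sub_sq_eq p E hp]
        ring

end Weights

theorem div_sqrt_le_of_sq_le_sq_mul {a t V : ℝ} (ht : 0 ≤ t) (h : a ^ 2 ≤ t ^ 2 * V) :
    a / √V ≤ t := by
  rcases le_or_gt V 0 with hV | hV
  · rwa [Real.sqrt_eq_zero'.mpr hV, div_zero]
  have hs := Real.sqrt_pos.mpr hV
  rw [div_le_iff₀ hs]
  nlinarith [Real.sq_sqrt hV.le, mul_nonneg ht hs.le]

namespace Matrix.IsHermitian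

variable {n : Type*} [Fintype n] [DecidableEq n] {H : Matrix n n ℂ} (hH : H.IsHermitian)

local notation "U" => (hH.eigenvectorUnitary : Matrix n n ℂ)

noncomputable def spectralWeight (ψ : n → ℂ) (k : n) : ℝ := ‖(star U *ᵥ ψ) k‖ ^ 2

theorem star_dotProduct_conj_diagonal_mulVec (e ψ : n → ℂ) :
    star ψ ⬝ᵥ (U * diagonal e * star U) *ᵥ ψ = ∑ k, (hH.spectralWeight ψ k : ℂ) * e k := by
  have hstar : star (star U *ᵥ ψ) = star ψ ᵥ* U := by
    rw [star_mulVec, star_eq_conjTranspose, conjTranspose_conjTranspose]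
  rw [← mulVec_mulVec, ← mulVec_mulVec, dotProduct_mulVec, ← hstar]
  refine sum_congr rfl fun k _ => ?_
  rw [mulVec_diagonal, spectralWeight, Pi.star_apply, Complex.star_def, Complex.ofReal_pow,
    ← Complex.conj_mul']
  ring

theorem sum_spectralWeight (ψ : n → ℂ) : ∑ k, hH.spectralWeight ψ k = ∑ i, ‖ψ i‖ ^ 2 := by
  have h := hH.star_dotProduct_conj_diagonal_mulVec (fun _ => 1) ψ
  rw [diagonal_one, mul_one, Unitary.mul_star_self_of_mem hH.eigenvectorUnitary.2, one_mulVec]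
    at h
  simp only [dotProduct, Pi.star_apply, Complex.star_def, Complex.conj_mul', mul_one] at h
  exact_mod_cast h.symm

theorem mul_self_eq_conj_diagonal :
    H * H = U * diagonal (fun k => (hH.eigenvalues k : ℂ) ^ 2) * star U := by
  conv_lhs => rw [hH.spectral_theorem]
  rw [← map_mul, diagonal_mul_diagonal, Unitary.conjStarAlgAut_apply]
  simp [sq]

theorem exp_smul_eq_conj_diagonal (z : ℂ) :
    NormedSpace.exp (z • H) =
      U * diagonal (fun k => Complex.exp (z * hH.eigenvalues k)) * star U := by
  have hinv : U⁻¹ = star U :=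
    inv_eq_left_inv (Unitary.star_mul_self_of_mem hH.eigenvectorUnitary.2)
  have hunit : IsUnit U := (Unitary.toUnits hH.eigenvectorUnitary).isUnit
  conv_lhs => rw [hH.spectral_theorem]
  rw [← map_smul, Unitary.conjStarAlgAut_apply, ← hinv,
    exp_conj _ _ hunit, ← diagonal_smul, exp_diagonal]
  congr 3
  funext k
  simp [Complex.exp_eq_exp_ℂ]

theorem star_dotProduct_mulVec_eq_sum (ψ : n → ℂ) :
    star ψ ⬝ᵥ H *ᵥ ψ = ((∑ k, hH.spectralWeight ψ k * hH.eigenvalues k : ℝ) : ℂ) := by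
  conv_lhs => rw [hH.spectral_theorem, Unitary.conjStarAlgAut_apply]
  push_cast
  exact hH.star_dotProduct_conj_diagonal_mulVec _ ψ

theorem star_dotProduct_mul_self_mulVec_eq_sum (ψ : n → ℂ) :
    star ψ ⬝ᵥ (H * H) *ᵥ ψ = ((∑ k, hH.spectralWeight ψ k * hH.eigenvalues k ^ 2 : ℝ) : ℂ) := by
  push_cast
  rw [hH.mul_self_eq_conj_diagonal, hH.star_dotProduct_conj_diagonal_mulVec]

theorem star_dotProduct_exp_smul_mulVec_eq_sum (z : ℂ) (ψ : n → ℂ) :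
    star ψ ⬝ᵥ NormedSpace.exp (z • H) *ᵥ ψ =
      ∑ k, (hH.spectralWeight ψ k : ℂ) * Complex.exp (z * hH.eigenvalues k) := by
  rw [hH.exp_smul_eq_conj_diagonal, hH.star_dotProduct_conj_diagonal_mulVec]

end Matrix.IsHermitian

open Real in
/-- Mandelstam–Tamm quantum speed limit: if `H` is Hermitian, `ψ` is a unit vector and
`⟨ψ, e^{-iHt_r} ψ⟩ = 0` for some `t_r > 0`, then
`t_r ≥ π / (2 √(⟨ψ,H²ψ⟩ - ⟨ψ,Hψ⟩²))`. -/
theorem mandelstam_tamm_bound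
    (N : ℕ) (H : Matrix (Fin N) (Fin N) ℂ) (hH : H.IsHermitian)
    (ψ : Fin N → ℂ) (hψ : ∑ i, ‖ψ i‖ ^ 2 = 1)
    (tr : ℝ) (htr : 0 < tr)
    (horth : ∑ i, (starRingEnd ℂ) (ψ i) *
        ((NormedSpace.exp ((-(Complex.I * tr)) • H)).mulVec ψ) i = 0) :
    tr ≥ Real.pi / (2 * Real.sqrt
        ((∑ i, (starRingEnd ℂ) (ψ i) * ((H * H).mulVec ψ) i).re -
          ((∑ i, (starRingEnd ℂ) (ψ i) * (H.mulVec ψ) i).re) ^ 2)) := by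
  change (star ψ ⬝ᵥ NormedSpace.exp ((-(Complex.I * tr)) • H) *ᵥ ψ) = 0 at horth
  change π / (2 * √((star ψ ⬝ᵥ (H * H) *ᵥ ψ).re - (star ψ ⬝ᵥ H *ᵥ ψ).re ^ 2)) ≤ tr
  rw [hH.star_dotProduct_exp_smul_mulVec_eq_sum] at horth
  rw [hH.star_dotProduct_mulVec_eq_sum, hH.star_dotProduct_mul_self_mulVec_eq_sum,
    Complex.ofReal_re, Complex.ofReal_re, ← div_div]
  exact div_sqrt_le_of_sq_le_sq_mul htr.le (pi_div_two_sq_le_sq_mul_variance _ _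
    (fun k => sq_nonneg _) ((hH.sum_spectralWeight ψ).trans hψ) horth)
end

section
/- Fix an integer M ≥ 2 and real numbers λ_1 < … < λ_N whose pairwise differences are integer multiples of π/t_0, and positive weights w_n summing to 1 with γ(t) = Σ_n w_n e^{-iλ_n t}. Partition indices into classes k ∈ {0,…,M-1} by (t_0/π)(λ_n - λ_1) mod M = k, and set R_k = Σ_{n in class k} w_n (signed appropriately). Then γ(2 m t_0/M) = 0 for all m = 1,…,M-1 if and only if R_0 = R_1 = … = R_{M-1}. -/
/-!
Since `λₙ - λ₁ = zₙ π / t₀`, the sample `γ(2mt₀/M)` is a unimodular phase times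
`Σₙ wₙ e^{-2πi zₙ m / M}`, which depends on `zₙ` only modulo `M`. Grouping the indices by residue
turns it into the discrete Fourier transform, at `m`, of the class sums `R : ZMod M → ℂ`.
By Fourier inversion on `ZMod M`, the transform vanishes off `0` exactly when `R` is constant.
-/

open Finset

namespace ZMod

open scoped ZMod

lemma intCast_eq_natCast_iff_emod {N : ℕ} {a : ℤ} {k : ℕ} (hk : k < N) :
    (a : ZMod N) = k ↔ a % N = k := by
  rw [← Int.cast_natCast, intCast_eq_intCast_iff',
    Int.emod_eq_of_lt (a := k) (by omega) (by omega)]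

variable {N : ℕ} [NeZero N] {E : Type*} [AddCommGroup E] [Module ℂ E]

lemma dft_const (c : E) : 𝓕 (fun _ : ZMod N ↦ c) = Pi.single 0 ((N : ℂ) • c) := by
  ext k
  rw [dft_apply, ← sum_smul]
  simp_rw [← mul_neg]
  rw [AddChar.sum_mulShift _ (isPrimitive_stdAddChar N)]
  by_cases hk : k = 0 <;> simp [hk]

lemma forall_dft_eq_zero_iff_eq_const (Φ : ZMod N → E) :
    (∀ k ≠ 0, 𝓕 Φ k = 0) ↔ ∀ j, Φ j = Φ 0 := by
  constructor
  · intro h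
    have hconst : 𝓕 Φ = 𝓕 (fun _ ↦ (N : ℂ)⁻¹ • 𝓕 Φ 0) := by
      ext k
      rw [dft_const, smul_smul, mul_inv_cancel₀ (NeZero.ne _), one_smul]
      by_cases hk : k = 0
      · subst hk; simp
      · simp [hk, h k hk]
    intro j
    have := congrFun (dft.injective hconst)
    rw [this j, this 0]
  · intro h k hk
    rw [show Φ = fun _ ↦ Φ 0 from funext h, dft_const, Pi.single_eq_of_ne hk]

lemma forall_natCast_lt_iff {P : ZMod N → Prop} : (∀ k < N, P k) ↔ ∀ c, P c :=
  ⟨fun h c ↦ natCast_zmod_val c ▸ h c.val c.val_lt, fun h k _ ↦ h k⟩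

lemma forall_natCast_pos_lt_iff {P : ZMod N → Prop} :
    (∀ m : ℕ, 1 ≤ m → m < N → P m) ↔ ∀ c ≠ 0, P c := by
  refine ⟨fun h c hc ↦ natCast_zmod_val c ▸ h c.val ?_ c.val_lt, fun h m hm hmN ↦ h m ?_⟩
  · exact Nat.one_le_iff_ne_zero.mpr ((val_ne_zero c).mpr hc)
  · rw [Ne, natCast_eq_zero_iff]
    exact fun hdvd ↦ by have := Nat.eq_zero_of_dvd_of_lt hdvd hmN; omega

end ZMod

open ZMod Complex
open scoped Real

section

variable {ι : Type*} [Fintype ι] (M : ℕ) (z : ι → ℤ) (w : ι → ℂ)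

noncomputable def classSum (c : ZMod M) : ℂ := ∑ n with (z n : ZMod M) = c, w n

lemma dft_classSum [NeZero M] (m : ZMod M) :
    𝓕 (classSum M z w) m = ∑ n, stdAddChar (-((z n : ZMod M) * m)) * w n := by
  rw [dft_apply, ← sum_fiberwise univ (fun n ↦ (z n : ZMod M))]
  simp only [classSum, smul_eq_mul, mul_sum]
  refine sum_congr rfl fun c _ ↦ sum_congr rfl fun n hn ↦ ?_
  rw [(mem_filter.mp hn).2]

end

lemma exp_sample_eq_mul_stdAddChar {M : ℕ} [NeZero M] {t₀ : ℝ} (ht₀ : t₀ ≠ 0) (l₀ : ℝ) (z : ℤ)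
    (m : ℕ) :
    exp (-I * ((l₀ + z * (π / t₀) : ℝ) : ℂ) * ((2 * m * t₀ / M : ℝ) : ℂ)) =
      exp (-I * l₀ * ((2 * m * t₀ / M : ℝ) : ℂ)) * stdAddChar (-((z : ZMod M) * (m : ZMod M))) := by
  have hcast : -((z : ZMod M) * (m : ZMod M)) = ((-(z * m) : ℤ) : ZMod M) := by push_cast; ring
  rw [hcast, stdAddChar_coe, ← exp_add]
  have ht₀' : (t₀ : ℂ) ≠ 0 := ofReal_ne_zero.mpr ht₀
  congr 1
  push_cast
  field_simp
  ring

lemma sum_mul_exp_sample_eq {ι : Type*} [Fintype ι] (M : ℕ) [NeZero M] {t₀ : ℝ} (ht₀ : t₀ ≠ 0)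
    (lam : ι → ℝ) (l₀ : ℝ) (z : ι → ℤ) (hz : ∀ n, lam n = l₀ + z n * (π / t₀)) (w : ι → ℂ)
    (m : ℕ) :
    ∑ n, w n * exp (-I * lam n * ((2 * m * t₀ / M : ℝ) : ℂ)) =
      exp (-I * l₀ * ((2 * m * t₀ / M : ℝ) : ℂ)) * 𝓕 (classSum M z w) m := by
  rw [dft_classSum, mul_sum]
  refine sum_congr rfl fun n _ ↦ ?_
  rw [hz n, exp_sample_eq_mul_stdAddChar ht₀]
  ring

theorem rate_condition_iff_class_sums_equal_general
    (N M : ℕ) (hM : 2 ≤ M) (t₀ : ℝ) (ht₀ : 0 < t₀)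
    (hN : 0 < N)
    (lam : Fin N → ℝ)
    (z : Fin N → ℤ)
    (hz : ∀ n, lam n = lam ⟨0, hN⟩ + (z n : ℝ) * (Real.pi / t₀))
    (w : Fin N → ℝ) :
    ((∀ m : ℕ, 1 ≤ m → m < M →
        (∑ n, (w n : ℂ) *
          Complex.exp (-(Complex.I) * (lam n : ℝ) * ((2 * (m : ℝ) * t₀ / M : ℝ)))) = 0)
      ↔ (∀ k, k < M →
          (∑ n ∈ Finset.univ.filter (fun n => z n % (M : ℤ) = (k : ℤ)), w n) =
            ∑ n ∈ Finset.univ.filter (fun n => z n % (M : ℤ) = 0), w n)) := by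
  have : NeZero M := ⟨by omega⟩
  have hamp := sum_mul_exp_sample_eq M ht₀.ne' lam (lam ⟨0, hN⟩) z hz (fun n ↦ (w n : ℂ))
  set Φ := classSum M z (fun n ↦ (w n : ℂ))
  have hclass (k : ℕ) (hk : k < M) : ((∑ n with z n % M = k, w n : ℝ) : ℂ) = Φ k := by
    simp only [Φ, classSum, ofReal_sum]
    exact sum_congr (filter_congr fun n _ ↦ (intCast_eq_natCast_iff_emod hk).symm) fun _ _ ↦ rfl
  calc _ ↔ ∀ m : ℕ, 1 ≤ m → m < M → 𝓕 Φ m = 0 := by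
        simp only [hamp, mul_eq_zero, exp_ne_zero, false_or]
    _ ↔ ∀ c ≠ 0, 𝓕 Φ c = 0 := forall_natCast_pos_lt_iff (P := fun c ↦ 𝓕 Φ c = 0)
    _ ↔ ∀ c, Φ c = Φ 0 := forall_dft_eq_zero_iff_eq_const Φ
    _ ↔ ∀ k < M, Φ k = Φ 0 := (forall_natCast_lt_iff (P := fun c ↦ Φ c = Φ 0)).symm
    _ ↔ _ := by
      refine forall₂_congr fun k hk ↦ ?_
      rw [← hclass k hk, ← Nat.cast_zero, ← hclass 0 (by omega), ofReal_inj, Nat.cast_zero]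

/-- Rate condition for transfer at rate `M/(2t₀)`: with eigenvalues
`λₙ = λ₁ + zₙ·(π/t₀)` (integer `zₙ`, increasingly ordered) and positive weights `wₙ`
summing to `1`, the return amplitude `γ(t) = Σₙ wₙ e^{-iλₙt}` vanishes at
`t = 2mt₀/M` for all `m = 1,…,M-1` if and only if the class sums
`R_k = Σ_{n : zₙ ≡ k (mod M)} wₙ` are all equal. -/
theorem rate_condition_iff_class_sums_equal
    (N M : ℕ) (hM : 2 ≤ M) (t₀ : ℝ) (ht₀ : 0 < t₀)
    (hN : 0 < N)
    (lam : Fin N → ℝ) (hmono : StrictMono lam)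
    (z : Fin N → ℤ)
    (hz : ∀ n, lam n = lam ⟨0, hN⟩ + (z n : ℝ) * (Real.pi / t₀))
    (w : Fin N → ℝ) (hw : ∀ n, 0 < w n) (hsum : ∑ n, w n = 1) :
    ((∀ m : ℕ, 1 ≤ m → m < M →
        (∑ n, (w n : ℂ) *
          Complex.exp (-(Complex.I) * (lam n : ℝ) * ((2 * (m : ℝ) * t₀ / M : ℝ)))) = 0)
      ↔ (∀ k, k < M →
          (∑ n ∈ Finset.univ.filter (fun n => z n % (M : ℤ) = (k : ℤ)), w n) =
            ∑ n ∈ Finset.univ.filter (fun n => z n % (M : ℤ) = 0), w n)) :=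
  rate_condition_iff_class_sums_equal_general N M hM t₀ ht₀ hN lam z hz w
end

section
/- Let H be an N×N Hermitian matrix achieving perfect state transfer exp(-i t_0 H) e_1 = e^{iφ} e_N, and suppose H commutes with the mirror permutation S. Then exp(-i t_0 H) = e^{iφ} S, and consequently exp(-2 i t_0 H) = e^{2iφ} I; in particular the state revives at the input spin at time 2t_0, and perfect transfer from site n to site N+1-n occurs for every n at time t_0. -/
/-! Write `U = exp(-i t₀ H)`. Both `S` and `U` commute with `H`, hence so does `S U`, and perfect
state transfer says that `S U e₁ = e^{iφ} e₁`. Since the couplings are nonzero, `e₁` is a cyclic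
vector of the tridiagonal `H`: from `(D H)ₘ = (H D)ₘ` column `m + 1` of a matrix `D` commuting with
`H` is determined by columns `≤ m`. Applied to `D = S U - e^{iφ}` this gives `S U = e^{iφ}`, i.e.
`U = e^{iφ} S`, and squaring with `S² = 1` gives the revival at `2 t₀`. -/

open Matrix

/-- The mirror (order-reversing) permutation matrix `S eₙ = e_{N+1-n}`. -/
def mirrorC (N : ℕ) : Matrix (Fin N) (Fin N) ℂ :=
  Matrix.of fun i j => if j = i.rev then 1 else 0

namespace Matrix

variable {K : Type*} [Semiring K] [NoZeroDivisors K] {N : ℕ}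

theorem eq_zero_of_commute_of_col_zero {H D : Matrix (Fin N) (Fin N) K}
    (hH_below : ∀ x m : Fin N, (m : ℕ) + 1 < x → H x m = 0)
    (hH_sub : ∀ m : Fin N, ∀ hm : (m : ℕ) + 1 < N, H ⟨m + 1, hm⟩ m ≠ 0)
    (hDH : Commute D H) (hN : 0 < N) (hD0 : ∀ i, D i ⟨0, hN⟩ = 0) : D = 0 := by
  have hcols : ∀ m (hm : m < N) i, D i ⟨m, hm⟩ = 0 := by
    intro m
    induction m using Nat.strong_induction_on with
    | _ m ih =>
      intro hm i
      cases m with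
      | zero => exact hD0 i
      | succ k =>
        have hk : k < N := by omega
        have hprev : ∀ x : Fin N, (x : ℕ) ≤ k → D i x = 0 := fun x hx =>
          ih x (by omega) x.isLt i
        have hentry := congrFun (congrFun hDH.eq i) ⟨k, hk⟩
        rw [mul_apply, mul_apply, Finset.sum_eq_single ⟨k + 1, hm⟩,
          Finset.sum_eq_zero fun x _ => by rw [ih k (by omega) hk x, mul_zero]] at hentry
        · exact (mul_eq_zero.mp hentry).resolve_right (hH_sub ⟨k, hk⟩ hm)
        · intro x _ hx
          rcases Nat.lt_or_ge (k + 1) x with hlt | hle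
          · rw [hH_below x ⟨k, hk⟩ hlt, mul_zero]
          · rw [hprev x (by have : (x : ℕ) ≠ k + 1 := Fin.val_ne_of_ne hx; omega), zero_mul]
        · simp
  ext i j
  exact hcols j j.isLt i

end Matrix

theorem triC_apply_of_lt {N : ℕ} (B J : ℕ → ℝ) (x m : Fin N) (h : (m : ℕ) + 1 < x) :
    triC N B J x m = 0 := by
  simp only [triC, of_apply]
  split_ifs <;> first | rfl | omega

theorem triC_apply_succ {N : ℕ} (B J : ℕ → ℝ) (m : Fin N) (hm : (m : ℕ) + 1 < N) :
    triC N B J ⟨m + 1, hm⟩ m = J m := by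
  simp only [triC, of_apply]
  split_ifs <;> first | rfl | omega

theorem mirrorC_mul_apply {N : ℕ} (M : Matrix (Fin N) (Fin N) ℂ) (i j : Fin N) :
    (mirrorC N * M) i j = M i.rev j := by
  simp [mirrorC, mul_apply]

theorem mirrorC_mul_self (N : ℕ) : mirrorC N * mirrorC N = 1 := by
  ext i j
  rw [mirrorC_mul_apply]
  simp [mirrorC, one_apply, eq_comm]

theorem perfect_state_transfer_implies_mirror_general
    (N : ℕ) (hN : 0 < N) (B J : ℕ → ℝ) (t₀ φ : ℝ)
    (hJ : ∀ i, i + 1 < N → J i ≠ 0)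
    (hcomm : mirrorC N * triC N B J = triC N B J * mirrorC N)
    (hPST : (NormedSpace.exp ((-(Complex.I * t₀)) • triC N B J)).mulVec
        (Pi.single (⟨0, hN⟩ : Fin N) (1 : ℂ)) =
      Complex.exp (Complex.I * φ) •
        (Pi.single ((⟨0, hN⟩ : Fin N).rev) (1 : ℂ) : Fin N → ℂ)) :
    NormedSpace.exp ((-(Complex.I * t₀)) • triC N B J) =
        Complex.exp (Complex.I * φ) • mirrorC N ∧
      NormedSpace.exp ((-(Complex.I * (2 * t₀))) • triC N B J) =
        Complex.exp (2 * Complex.I * φ) • (1 : Matrix (Fin N) (Fin N) ℂ) := by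
  set H := triC N B J
  set U := NormedSpace.exp ((-(Complex.I * t₀)) • H)
  set c := Complex.exp (Complex.I * φ)
  have hUH : Commute U H := ((Commute.refl H).smul_left _).exp_left
  have hSU : mirrorC N * U = c • 1 := by
    rw [← sub_eq_zero]
    refine eq_zero_of_commute_of_col_zero (triC_apply_of_lt B J)
      (fun m hm => by rw [triC_apply_succ]; exact_mod_cast hJ m hm)
      (((show Commute (mirrorC N) H from hcomm).mul_left hUH).sub_left
        ((Commute.one_left H).smul_left c)) hN fun i => ?_
    have hcol := congrFun hPST i.rev
    simp only [mulVec_single_one, col_apply, Pi.smul_apply, Pi.single_apply, Fin.rev_inj] at hcol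
    simp [Matrix.sub_apply, mirrorC_mul_apply, hcol, one_apply]
  have hU : U = c • mirrorC N := by
    rw [← one_mul U, ← mirrorC_mul_self N, mul_assoc, hSU, Matrix.mul_smul, mul_one]
  refine ⟨hU, ?_⟩
  have hdouble : (-(Complex.I * (2 * (t₀ : ℂ)))) • H = (2 : ℕ) • ((-(Complex.I * t₀)) • H) := by
    rw [← Nat.cast_smul_eq_nsmul ℂ, smul_smul]; push_cast; ring_nf
  rw [hdouble, exp_nsmul]
  change U ^ 2 = _
  rw [hU, sq, smul_mul_smul, mirrorC_mul_self, ← Complex.exp_add]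
  ring_nf

/-- If a (Hermitian) real symmetric tridiagonal matrix `H` with nonzero couplings
commutes with the mirror permutation `S` and achieves perfect state transfer
`exp(-i t₀ H) e₁ = e^{iφ} e_N`, then `exp(-i t₀ H) = e^{iφ} S` as operators; in
particular `exp(-2i t₀ H) = e^{2iφ} 1`, so the state revives at the input at time `2t₀`
and every site `n` is transferred to site `N+1-n` at time `t₀`. -/
theorem perfect_state_transfer_implies_mirror
    (N : ℕ) (hN : 0 < N) (B J : ℕ → ℝ) (t₀ φ : ℝ) (ht₀ : 0 < t₀)
    (hJ : ∀ i, i + 1 < N → J i ≠ 0)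
    (hcomm : mirrorC N * triC N B J = triC N B J * mirrorC N)
    (hPST : (NormedSpace.exp ((-(Complex.I * t₀)) • triC N B J)).mulVec
        (Pi.single (⟨0, hN⟩ : Fin N) (1 : ℂ)) =
      Complex.exp (Complex.I * φ) •
        (Pi.single ((⟨0, hN⟩ : Fin N).rev) (1 : ℂ) : Fin N → ℂ)) :
    NormedSpace.exp ((-(Complex.I * t₀)) • triC N B J) =
        Complex.exp (Complex.I * φ) • mirrorC N ∧
      NormedSpace.exp ((-(Complex.I * (2 * t₀))) • triC N B J) =
        Complex.exp (2 * Complex.I * φ) • (1 : Matrix (Fin N) (Fin N) ℂ) :=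
  perfect_state_transfer_implies_mirror_general N hN B J t₀ φ hJ hcomm hPST
end
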